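/- Let K_2,...,K_m be binary-string-valued random variables, and let K* = K_{i*} be one of them. Suppose for each i: H(K_i) ≥ |K_i| − ε (near uniformity, with |K_i| the bit-length), I(K_i; {K_j : j ≠ i}) ≤ ε (near independence), and |K*| ≤ |K_i|. Let V̄_i = K* ⊕ K̄_i, where K̄_i is the truncation of K_i to its first |K*| bits. Then I(K*; V̄_2,...,V̄_m) ≤ 2(m−2)ε. -/

import Mathlib

open Finset

/-- Probability that random variable `X` equals `a`, under weight function `p`. -/
noncomputable def pr {Ω α : Type*} [Fintype Ω] [DecidableEq α]
    (p : Ω → ℝ) (X : Ω → α) (a : α) : ℝ :=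
  ∑ ω ∈ Finset.univ.filter (fun ω => X ω = a), p ω

/-- Shannon entropy (in bits) of the random variable `X`. -/
noncomputable def ent {Ω α : Type*} [Fintype Ω] [Fintype α] [DecidableEq α]
    (p : Ω → ℝ) (X : Ω → α) : ℝ :=
  - ∑ a, pr p X a * Real.logb 2 (pr p X a)

/-- Mutual information `I(X;Y) = H(X) + H(Y) - H(X,Y)`. -/
noncomputable def mi {Ω α β : Type*} [Fintype Ω] [Fintype α] [Fintype β]
    [DecidableEq α] [DecidableEq β] (p : Ω → ℝ) (X : Ω → α) (Y : Ω → β) : ℝ :=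
  ent p X + ent p Y - ent p (fun ω => (X ω, Y ω))

/-- `p` is a probability mass function on the finite sample space `Ω`. -/
def IsProb {Ω : Type*} [Fintype Ω] (p : Ω → ℝ) : Prop :=
  (∀ ω, 0 ≤ p ω) ∧ ∑ ω, p ω = 1

/-- Mutual independence of a finite family of random variables. -/
def MutIndep {Ω ι : Type*} [Fintype Ω] [Fintype ι] [DecidableEq ι] {α : ι → Type*}
    [∀ i, DecidableEq (α i)] (p : Ω → ℝ) (X : ∀ i, Ω → α i) : Prop :=
  ∀ a : ∀ i, α i, pr p (fun ω i => X i ω) a = ∏ i, pr p (X i) (a i)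

/-- Independence of a pair of random variables. -/
def IndepPair {Ω α β : Type*} [Fintype Ω] [DecidableEq α] [DecidableEq β]
    (p : Ω → ℝ) (X : Ω → α) (Y : Ω → β) : Prop :=
  ∀ a b, pr p (fun ω => (X ω, Y ω)) (a, b) = pr p X a * pr p Y b

/-!
Write `K̄ᵢ` for the keys truncated to `|K*|` bits. Since `(K*, V̄)` determines `(K*, (K̄ᵢ)ᵢ)`,
`I(K*; V̄) ≤ H(K*) + H(V̄) - H(K*, (K̄ᵢ)ᵢ)`, and `H(V̄) ≤ (m-2)|K*|` by counting values.
Dropping bits loses at most one bit of entropy each, so `H(K̄ᵢ) ≥ |K*| - ε`; by data processing each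
`K̄ᵢ` shares at most `ε` bits with `K*` and the other truncated keys, so revealing the truncated
keys one at a time gives `H(K*, (K̄ᵢ)ᵢ) ≥ H(K*) + Σᵢ (H(K̄ᵢ) - ε) ≥ H(K*) + (m-2)(|K*| - 2ε)`.
-/

open Real

section Probability

variable {Ω α β γ : Type*} [Fintype Ω] {p : Ω → ℝ}

lemma pr_nonneg [DecidableEq α] (hp : IsProb p) (X : Ω → α) (a : α) : 0 ≤ pr p X a :=
  Finset.sum_nonneg fun ω _ => hp.1 ω

lemma sum_pr_mul [Fintype α] [DecidableEq α] (p : Ω → ℝ) (X : Ω → α) (f : α → ℝ) :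
    ∑ a, pr p X a * f a = ∑ ω, p ω * f (X ω) := by
  simp only [pr, Finset.sum_mul]
  rw [← Finset.sum_fiberwise Finset.univ X (fun ω => p ω * f (X ω))]
  refine Finset.sum_congr rfl fun a _ => Finset.sum_congr rfl fun ω hω => ?_
  rw [(Finset.mem_filter.1 hω).2]

lemma sum_pr [Fintype α] [DecidableEq α] (hp : IsProb p) (X : Ω → α) : ∑ a, pr p X a = 1 := by
  simpa [hp.2] using sum_pr_mul p X 1

lemma sum_pr_mul_comp [Fintype α] [Fintype β] [DecidableEq α] [DecidableEq β]
    (p : Ω → ℝ) (X : Ω → α) (g : α → β) (f : β → ℝ) :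
    ∑ a, pr p X a * f (g a) = ∑ b, pr p (fun ω => g (X ω)) b * f b := by
  rw [sum_pr_mul, sum_pr_mul]

lemma sum_pr_mul_congr [Fintype α] [DecidableEq α] (hp : IsProb p) (X : Ω → α) {f g : α → ℝ}
    (hfg : ∀ a, 0 < pr p X a → f a = g a) :
    ∑ a, pr p X a * f a = ∑ a, pr p X a * g a := by
  refine Finset.sum_congr rfl fun a _ => ?_
  rcases (pr_nonneg hp X a).eq_or_lt with h | h
  · simp [← h]
  · rw [hfg a h]

lemma pr_le_pr_comp [DecidableEq α] [DecidableEq β] (hp : IsProb p) (X : Ω → α) (g : α → β)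
    (a : α) : pr p X a ≤ pr p (fun ω => g (X ω)) (g a) := by
  refine Finset.sum_le_sum_of_subset_of_nonneg (fun ω hω => ?_) fun ω _ _ => hp.1 ω
  simp only [Finset.mem_filter, Finset.mem_univ, true_and] at hω ⊢
  rw [hω]

lemma pr_comp_pos [DecidableEq α] [DecidableEq β] (hp : IsProb p) {X : Ω → α} (g : α → β)
    {a : α} (ha : 0 < pr p X a) : 0 < pr p (fun ω => g (X ω)) (g a) :=
  ha.trans_le (pr_le_pr_comp hp X g a)

lemma pr_snd_eq_sum [Fintype α] [DecidableEq α] [DecidableEq γ] (p : Ω → ℝ) (X : Ω → α)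
    (U : Ω → γ) (u : γ) : pr p U u = ∑ x, pr p (fun ω => (X ω, U ω)) (x, u) := by
  unfold pr
  rw [← Finset.sum_fiberwise _ X p]
  refine Finset.sum_congr rfl fun x _ => Finset.sum_congr ?_ fun _ _ => rfl
  ext ω
  simp [and_comm]

end Probability

section Entropy

variable {Ω α β γ : Type*} [Fintype Ω] {p : Ω → ℝ}
  [Fintype α] [Fintype β] [Fintype γ] [DecidableEq α] [DecidableEq β] [DecidableEq γ]

/-- Gibbs' inequality. -/
lemma ent_le_neg_sum_pr_mul_logb (hp : IsProb p) (X : Ω → α) {r : α → ℝ}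
    (hr0 : ∀ a, 0 ≤ r a) (hr1 : ∑ a, r a ≤ 1) (hpos : ∀ a, 0 < pr p X a → 0 < r a) :
    ent p X ≤ -∑ a, pr p X a * logb 2 (r a) := by
  have hlog2 : 0 < log 2 := log_pos one_lt_two
  have key : ∀ a, pr p X a * (logb 2 (r a) - logb 2 (pr p X a)) ≤ (r a - pr p X a) / log 2 := by
    intro a
    rcases (pr_nonneg hp X a).eq_or_lt with h | h
    · rw [← h]
      simpa using div_nonneg (hr0 a) hlog2.le
    · have hra := hpos a h
      rw [← logb_div hra.ne' h.ne', logb, ← mul_div_assoc,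
        div_le_div_iff_of_pos_right hlog2]
      calc pr p X a * log (r a / pr p X a) ≤ pr p X a * (r a / pr p X a - 1) :=
            mul_le_mul_of_nonneg_left (log_le_sub_one_of_pos (div_pos hra h)) h.le
        _ = r a - pr p X a := by field_simp
  have hsum := Finset.sum_le_sum fun a (_ : a ∈ Finset.univ) => key a
  simp only [mul_sub, Finset.sum_sub_distrib] at hsum
  rw [← Finset.sum_div, Finset.sum_sub_distrib, sum_pr hp X] at hsum
  have hr : (∑ a, r a - 1) / log 2 ≤ 0 := div_nonpos_of_nonpos_of_nonneg (by linarith) hlog2.le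
  rw [ent]
  linarith

lemma sum_pr_mul_logb_pr_comp (X : Ω → α) (g : α → β) :
    ∑ a, pr p X a * logb 2 (pr p (fun ω => g (X ω)) (g a)) = -ent p (fun ω => g (X ω)) := by
  rw [sum_pr_mul_comp p X g (fun b => logb 2 (pr p (fun ω => g (X ω)) b)), ent, neg_neg]

lemma ent_comp_le (hp : IsProb p) (X : Ω → α) (g : α → β) :
    ent p (fun ω => g (X ω)) ≤ ent p X := by
  rw [← neg_le_neg_iff, ← sum_pr_mul_logb_pr_comp X g, ent, neg_neg]
  refine Finset.sum_le_sum fun a _ => ?_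
  rcases (pr_nonneg hp X a).eq_or_lt with h | h
  · simp [← h]
  · exact mul_le_mul_of_nonneg_left
      (logb_le_logb_of_le one_lt_two h (pr_le_pr_comp hp X g a)) h.le

lemma ent_le_of_eq_comp (hp : IsProb p) {X : Ω → α} {Y : Ω → β} (g : β → α)
    (hg : ∀ ω, X ω = g (Y ω)) : ent p X ≤ ent p Y := by
  simpa only [← hg] using ent_comp_le hp Y g

lemma ent_eq_of_inverse (hp : IsProb p) {X : Ω → α} {Y : Ω → β} (f : α → β) (g : β → α)
    (hf : ∀ ω, Y ω = f (X ω)) (hg : ∀ ω, X ω = g (Y ω)) : ent p X = ent p Y :=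
  (ent_le_of_eq_comp hp g hg).antisymm (ent_le_of_eq_comp hp f hf)

lemma ent_le_logb_card [Nonempty α] (hp : IsProb p) (X : Ω → α) :
    ent p X ≤ logb 2 (Fintype.card α) := by
  have hcard : (0 : ℝ) < Fintype.card α := by exact_mod_cast Fintype.card_pos
  have h := ent_le_neg_sum_pr_mul_logb hp X (r := fun _ => (Fintype.card α : ℝ)⁻¹)
    (fun _ => inv_nonneg.2 hcard.le) (by simp [hcard.ne']) (fun _ _ => inv_pos.2 hcard)
  rwa [← Finset.sum_mul, sum_pr hp, one_mul, logb_inv, neg_neg] at h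

lemma ent_pi_le {ι : Type*} [Fintype ι] [DecidableEq ι] [Nonempty α] (hp : IsProb p)
    (X : Ω → ι → α) : ent p X ≤ Fintype.card ι * logb 2 (Fintype.card α) := by
  simpa [Fintype.card_fun, logb_pow] using ent_le_logb_card hp X

lemma ent_triple_add_ent_le (hp : IsProb p) (X : Ω → α) (W : Ω → β) (U : Ω → γ) :
    ent p (fun ω => (X ω, W ω, U ω)) + ent p U
      ≤ ent p (fun ω => (X ω, U ω)) + ent p (fun ω => (W ω, U ω)) := by
  set T : Ω → α × β × γ := fun ω => (X ω, W ω, U ω)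
  set pXU := pr p (fun ω => (X ω, U ω))
  set pWU := pr p (fun ω => (W ω, U ω))
  set pU := pr p U
  -- Gibbs against the law making `X` and `W` conditionally independent given `U`; the junk
  -- value of `/ 0` is harmless, since only the support of `T` matters.
  set r : α × β × γ → ℝ := fun z => pXU (z.1, z.2.2) * pWU z.2 / pU z.2.2
  have hr1 : ∑ z, r z = 1 := by
    calc ∑ z, r z = ∑ u, (∑ x, pXU (x, u)) * (∑ w, pWU (w, u)) / pU u := by
          simp only [r, Fintype.sum_prod_type, Finset.sum_mul_sum, Finset.sum_div]
          exact (Finset.sum_congr rfl fun _ _ => Finset.sum_comm).trans Finset.sum_comm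
      _ = ∑ u, pU u := by
          simp only [pXU, pWU, pU, ← pr_snd_eq_sum, mul_self_div_self]
      _ = 1 := sum_pr hp U
  have hpos : ∀ z, 0 < pr p T z →
      0 < pXU (z.1, z.2.2) ∧ 0 < pWU z.2 ∧ 0 < pU z.2.2 := fun z hz =>
    ⟨pr_comp_pos hp (fun z : α × β × γ => (z.1, z.2.2)) hz, pr_comp_pos hp Prod.snd hz,
      pr_comp_pos hp (fun z : α × β × γ => z.2.2) hz⟩
  have hgibbs := ent_le_neg_sum_pr_mul_logb hp T (r := r)
    (fun z => div_nonneg (mul_nonneg (pr_nonneg hp _ _) (pr_nonneg hp _ _)) (pr_nonneg hp _ _))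
    hr1.le (fun z hz => by obtain ⟨h1, h2, h3⟩ := hpos z hz; exact div_pos (mul_pos h1 h2) h3)
  have hsplit : ∑ z, pr p T z * logb 2 (r z) = ∑ z, pr p T z * logb 2 (pXU (z.1, z.2.2))
      + ∑ z, pr p T z * logb 2 (pWU z.2) - ∑ z, pr p T z * logb 2 (pU z.2.2) := by
    rw [← Finset.sum_add_distrib, ← Finset.sum_sub_distrib]
    simp only [← mul_add, ← mul_sub]
    refine sum_pr_mul_congr hp T fun z hz => ?_
    obtain ⟨h1, h2, h3⟩ := hpos z hz
    rw [logb_div (mul_pos h1 h2).ne' h3.ne', logb_mul h1.ne' h2.ne']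
  rw [hsplit, sum_pr_mul_logb_pr_comp T (fun z : α × β × γ => (z.1, z.2.2)),
    sum_pr_mul_logb_pr_comp T Prod.snd, sum_pr_mul_logb_pr_comp T (fun z : α × β × γ => z.2.2)]
    at hgibbs
  linarith

lemma ent_pair_le (hp : IsProb p) (X : Ω → α) (W : Ω → β) :
    ent p (fun ω => (X ω, W ω)) ≤ ent p X + ent p W := by
  have hsub := ent_triple_add_ent_le hp X W (fun _ => ())
  have hunit : ent p (fun _ => ()) = 0 := by simp [ent, pr, hp.2]
  have hXW : ent p (fun ω => (X ω, W ω, ())) = ent p (fun ω => (X ω, W ω)) :=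
    ent_eq_of_inverse hp (fun z => (z.1, z.2.1)) (fun z => (z.1, z.2, ())) (fun _ => rfl)
      (fun _ => rfl)
  have hX : ent p (fun ω => (X ω, ())) = ent p X :=
    ent_eq_of_inverse hp Prod.fst (fun x => (x, ())) (fun _ => rfl) (fun _ => rfl)
  have hW : ent p (fun ω => (W ω, ())) = ent p W :=
    ent_eq_of_inverse hp Prod.fst (fun x => (x, ())) (fun _ => rfl) (fun _ => rfl)
  linarith

end Entropy

section MutualInformation

variable {Ω α β γ : Type*} [Fintype Ω] {p : Ω → ℝ}
  [Fintype α] [Fintype β] [Fintype γ] [DecidableEq α] [DecidableEq β] [DecidableEq γ]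

lemma mi_le_of_eq_comp_right (hp : IsProb p) (X : Ω → α) {Y : Ω → β} {Y' : Ω → γ} (g : β → γ)
    (hY : ∀ ω, Y' ω = g (Y ω)) : mi p X Y' ≤ mi p X Y := by
  obtain rfl : Y' = fun ω => g (Y ω) := funext hY
  have hpair : ent p (fun ω => (Y ω, g (Y ω))) = ent p Y :=
    ent_eq_of_inverse hp Prod.fst (fun y => (y, g y)) (fun _ => rfl) (fun _ => rfl)
  have htriple : ent p (fun ω => (X ω, Y ω, g (Y ω))) = ent p (fun ω => (X ω, Y ω)) :=
    ent_eq_of_inverse hp (fun z => (z.1, z.2.1)) (fun z => (z.1, z.2, g z.2)) (fun _ => rfl)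
      (fun _ => rfl)
  have hsub := ent_triple_add_ent_le hp X Y (fun ω => g (Y ω))
  unfold mi
  linarith

lemma mi_comm (hp : IsProb p) (X : Ω → α) (Y : Ω → β) : mi p X Y = mi p Y X := by
  have := ent_eq_of_inverse hp Prod.swap Prod.swap (X := fun ω => (X ω, Y ω))
    (Y := fun ω => (Y ω, X ω)) (fun _ => rfl) (fun _ => rfl)
  unfold mi
  linarith

lemma mi_le_of_eq_comp_left (hp : IsProb p) {X : Ω → α} {X' : Ω → γ} (Y : Ω → β) (f : α → γ)
    (hX : ∀ ω, X' ω = f (X ω)) : mi p X' Y ≤ mi p X Y := by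
  rw [mi_comm hp, mi_comm hp X]
  exact mi_le_of_eq_comp_right hp Y f hX

end MutualInformation

lemma ent_add_sum_le_ent_pair {Ω ι A B : Type*} [Fintype Ω] {p : Ω → ℝ} [Fintype ι]
    [DecidableEq ι] [Fintype A] [DecidableEq A] [Inhabited A] [Fintype B] [DecidableEq B]
    (hp : IsProb p) {ε : ℝ} (S : Ω → B) (W : ι → Ω → A)
    (hW : ∀ i, mi p (W i) (fun ω => (S ω, fun j : {j // j ≠ i} => W j ω)) ≤ ε) :
    ent p S + ∑ i, (ent p (W i) - ε) ≤ ent p (fun ω => (S ω, fun i => W i ω)) := by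
  let M (F : Finset ι) (ω : Ω) : ι → A := fun j => if j ∈ F then W j ω else default
  suffices h : ∀ F : Finset ι,
      ent p S + ∑ i ∈ F, (ent p (W i) - ε) ≤ ent p (fun ω => (S ω, M F ω)) by
    simpa [M] using h Finset.univ
  intro F
  induction F using Finset.induction_on with
  | empty => simpa using ent_le_of_eq_comp hp Prod.fst (X := S) (fun _ => rfl)
  | insert i F hi ih =>
    have hmi : mi p (W i) (fun ω => (S ω, M F ω)) ≤ ε :=
      (mi_le_of_eq_comp_right hp (W i) (fun y => (y.1, fun j =>
        if h : j ∈ F then y.2 ⟨j, ne_of_mem_of_not_mem h hi⟩ else default)) fun ω => by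
          simp [M]).trans (hW i)
    have hstep : ent p (fun ω => (W i ω, S ω, M F ω)) ≤ ent p (fun ω => (S ω, M (insert i F) ω)) :=
      ent_le_of_eq_comp hp (fun y => (y.2 i, y.1, fun j => if j ∈ F then y.2 j else default))
        fun ω => by
          refine Prod.ext (by simp [M]) (Prod.ext rfl (funext fun j => ?_))
          by_cases hj : j ∈ F <;> simp [M, hj]
    rw [Finset.sum_insert hi]
    unfold mi at hmi
    linarith

lemma ent_take_ge {Ω : Type*} [Fintype Ω] {p : Ω → ℝ} (hp : IsProb p) {n k : ℕ} (h : k ≤ n)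
    (X : Ω → Fin n → Bool) : ent p X - (n - k) ≤ ent p (fun ω => Fin.take k h (X ω)) := by
  let R (ω : Ω) : Fin (n - k) → Bool := fun b => X ω ⟨k + b, by omega⟩
  have hsplit : ent p X ≤ ent p (fun ω => (Fin.take k h (X ω), R ω)) :=
    ent_le_of_eq_comp hp (fun y c => if hc : c < k then y.1 ⟨c, hc⟩ else y.2 ⟨c - k, by omega⟩)
      fun ω => by
        funext c
        by_cases hc : c < k
        · simp [hc, Fin.take_apply]
        · simp only [hc, dite_false, R]
          congr 1
          ext
          simp only
          omega
  have hR : ent p R ≤ (n - k : ℕ) := by simpa using ent_pi_le hp R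
  have := ent_pair_le hp (fun ω => Fin.take k h (X ω)) R
  push_cast [h] at hR
  linarith

section Keys

variable {Ω ι : Type*} [Fintype Ω] [Fintype ι] [DecidableEq ι] {p : Ω → ℝ} {ε : ℝ}
  {n : ι → ℕ} {i₀ : ι}

lemma mi_take_le_of_mi_le (hp : IsProb p) (K : ∀ i, Ω → Fin (n i) → Bool)
    (hshort : ∀ i, n i₀ ≤ n i)
    (hindep : ∀ i, mi p (K i) (fun ω (j : {j // j ≠ i}) => K j.1 ω) ≤ ε) (i : {i // i ≠ i₀}) :
    mi p (fun ω => Fin.take _ (hshort i) (K i ω))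
      (fun ω => (K i₀ ω, fun j : {j // j ≠ i} => Fin.take _ (hshort j.1.1) (K j.1.1 ω))) ≤ ε := by
  have hright : mi p (fun ω => Fin.take _ (hshort i) (K i ω))
      (fun ω => (K i₀ ω, fun j : {j // j ≠ i} => Fin.take _ (hshort j.1.1) (K j.1.1 ω)))
      ≤ mi p (fun ω => Fin.take _ (hshort i) (K i ω)) (fun ω (j : {j // j ≠ i.1}) => K j.1 ω) :=
    mi_le_of_eq_comp_right hp _ (fun z => (z ⟨i₀, Ne.symm i.2⟩,
      fun j => Fin.take _ (hshort j.1.1) (z ⟨j.1.1, fun h => j.2 (Subtype.ext h)⟩))) fun _ => rfl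
  have hleft : mi p (fun ω => Fin.take _ (hshort i) (K i ω)) (fun ω (j : {j // j ≠ i.1}) => K j.1 ω)
      ≤ mi p (K i) (fun ω (j : {j // j ≠ i.1}) => K j.1 ω) :=
    mi_le_of_eq_comp_left hp _ (Fin.take _ (hshort i)) fun _ => rfl
  exact (hright.trans hleft).trans (hindep i)

theorem mi_xor_views_le (hp : IsProb p) (K : ∀ i, Ω → Fin (n i) → Bool)
    (hshort : ∀ i, n i₀ ≤ n i) (huniform : ∀ i, ent p (K i) ≥ (n i : ℝ) - ε)
    (hindep : ∀ i, mi p (K i) (fun ω (j : {j // j ≠ i}) => K j.1 ω) ≤ ε) :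
    mi p (K i₀) (fun ω (i : {i // i ≠ i₀}) (b : Fin (n i₀)) =>
        xor (K i₀ ω b) (K i.1 ω (Fin.castLE (hshort i.1) b)))
      ≤ 2 * Fintype.card {i // i ≠ i₀} * ε := by
  set k := n i₀
  set V := fun ω (i : {i // i ≠ i₀}) (b : Fin k) =>
    xor (K i₀ ω b) (K i.1 ω (Fin.castLE (hshort i.1) b))
  set Kb : ι → Ω → Fin k → Bool := fun i ω => Fin.take k (hshort i) (K i ω)
  have hV : ent p V ≤ Fintype.card {i // i ≠ i₀} * k := by
    simpa [logb_pow, logb_self_eq_one one_lt_two] using ent_pi_le hp V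
  have hjoint : ent p (K i₀) + ∑ j : {i // i ≠ i₀}, (ent p (Kb j) - ε)
      ≤ ent p (fun ω => (K i₀ ω, V ω)) := by
    refine (ent_add_sum_le_ent_pair hp (K i₀) (fun j : {i // i ≠ i₀} => Kb j)
      (mi_take_le_of_mi_le hp K hshort hindep)).trans
      (ent_le_of_eq_comp hp (fun y : (Fin k → Bool) × ({i // i ≠ i₀} → Fin k → Bool) =>
        (y.1, fun j b => xor (y.1 b) (y.2 j b))) fun ω => ?_)
    refine Prod.ext rfl (funext fun j => funext fun b => ?_)
    simp [Kb, V, Fin.take_apply]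
  have hsum : ∑ _j : {i // i ≠ i₀}, ((k : ℝ) - 2 * ε)
      ≤ ∑ j : {i // i ≠ i₀}, (ent p (Kb j) - ε) :=
    Finset.sum_le_sum fun j _ => by linarith [ent_take_ge hp (hshort j) (K j), huniform j]
  rw [Finset.sum_const, Finset.card_univ, nsmul_eq_mul] at hsum
  unfold mi
  linarith

end Keys

theorem xor_views_leak_little_general
    {Ω : Type*} [Fintype Ω] (m : ℕ) (ε : ℝ)
    (p : Ω → ℝ) (hp : IsProb p)
    (n : Fin (m - 1) → ℕ) (K : ∀ i : Fin (m - 1), Ω → (Fin (n i) → Bool))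
    (istar : Fin (m - 1))
    (hshort : ∀ i, n istar ≤ n i)
    (huniform : ∀ i, ent p (K i) ≥ (n i : ℝ) - ε)
    (hindep : ∀ i, mi p (K i)
      (fun ω (j : {j : Fin (m - 1) // j ≠ i}) => K j.1 ω) ≤ ε) :
    mi p (K istar)
      (fun ω (i : {i : Fin (m - 1) // i ≠ istar}) (b : Fin (n istar)) =>
        xor (K istar ω b) (K i.1 ω (Fin.castLE (hshort i.1) b)))
      ≤ 2 * ((m : ℝ) - 2) * ε := by
  have hcard : ((Fintype.card {i // i ≠ istar} : ℕ) : ℝ) = m - 2 := by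
    have := istar.isLt
    rw [Fintype.card_subtype_compl, Fintype.card_fin, Fintype.card_unique]
    push_cast [show 1 ≤ m by omega, show 1 ≤ m - 1 by omega]
    ring
  simpa only [hcard] using mi_xor_views_le hp K hshort huniform hindep

/-- the `m−1` keys `K_2, …, K_m` (indexed here by `Fin (m-1)`) are
near-uniform and near-independent bit strings, `K* = K_{i*}` is a shortest one,
and `V̄_i = K* ⊕ K̄_i` with `K̄_i` the truncation of `K_i` to its first `|K*|`
bits.  Then `I(K*; V̄_2, …, V̄_m) ≤ 2(m−2)ε`. -/
theorem xor_views_leak_little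
    {Ω : Type*} [Fintype Ω] (m : ℕ) (hm : 2 ≤ m) (ε : ℝ)
    (p : Ω → ℝ) (hp : IsProb p)
    (n : Fin (m - 1) → ℕ) (K : ∀ i : Fin (m - 1), Ω → (Fin (n i) → Bool))
    (istar : Fin (m - 1))
    (hshort : ∀ i, n istar ≤ n i)
    (huniform : ∀ i, ent p (K i) ≥ (n i : ℝ) - ε)
    (hindep : ∀ i, mi p (K i)
      (fun ω (j : {j : Fin (m - 1) // j ≠ i}) => K j.1 ω) ≤ ε) :
    mi p (K istar)
      (fun ω (i : {i : Fin (m - 1) // i ≠ istar}) (b : Fin (n istar)) =>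
        xor (K istar ω b) (K i.1 ω (Fin.castLE (hshort i.1) b)))
      ≤ 2 * ((m : ℝ) - 2) * ε :=
  xor_views_leak_little_general m ε p hp n K istar hshort huniform hindep
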